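/- For every n ∈ ℕ₊, the independence number of the Birkhoff graph satisfies α(B_n) ≥ ∏_{i=1}^{⌊log₂ n⌋} ⌊n/2^i⌋!. -/

import Mathlib

open Equiv Finset

/-- `A` is an independent set of the Birkhoff graph `B_m`: no two of its elements differ
by a single cycle. -/
def IsIndep {m : ℕ} (A : Finset (Equiv.Perm (Fin m))) : Prop :=
  ∀ σ ∈ A, ∀ τ ∈ A, ¬ (σ * τ⁻¹).IsCycle

/-!
Let `m = ⌈n/2⌉`, `k = ⌊n/2⌋` and let `S_k` act on `Fin m` through `Fin k ↪ Fin m`. For an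
independent `A ⊆ S_m`, the permutations `(σ τ, τ)` of `Fin m ⊕ Fin k` with `σ ∈ A`, `τ ∈ S_k`
are pairwise independent: the quotient of two of them is `(σ₁ ρ σ₂⁻¹, ρ)` with `ρ = τ₁ τ₂⁻¹`,
and a single cycle of `Fin m ⊕ Fin k` preserving both summands is trivial on one of them. If
`ρ = 1`, then `σ₁ σ₂⁻¹` is a cycle; otherwise `σ₂ σ₁⁻¹ = σ₁ ρ σ₁⁻¹` is one. This multiplies
`|A|` by `k!`, and the bound `f n = ∏ ⌊n/2^i⌋!` satisfies `f n = k! f k ≤ k! f m`.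
-/

open Nat

namespace Equiv.Perm

variable {α β : Type*}

theorem IsCycle.permCongr {f : Perm α} (hf : f.IsCycle) (e : α ≃ β) :
    (e.permCongr f).IsCycle := by
  classical
  convert hf.extendDomain (e.trans (subtypeUnivEquiv fun _ => trivial).symm) using 1
  ext x
  simp [extendDomain_apply_subtype, Equiv.permCongr_apply]

theorem isCycle_permCongr_iff (e : α ≃ β) {f : Perm α} :
    (e.permCongr f).IsCycle ↔ f.IsCycle :=
  ⟨fun h => by simpa [← permCongr_symm] using h.permCongr e.symm, (·.permCongr e)⟩

theorem sumCongr_zpow (a : Perm α) (b : Perm β) (n : ℤ) :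
    sumCongr a b ^ n = sumCongr (a ^ n) (b ^ n) :=
  (map_zpow (sumCongrHom α β) (a, b) n).symm

theorem not_sameCycle_sumCongr_inl_inr (a : Perm α) (b : Perm β) (x : α) (y : β) :
    ¬ (sumCongr a b).SameCycle (Sum.inl x) (Sum.inr y) := by
  rintro ⟨n, hn⟩
  simp [sumCongr_zpow] at hn

theorem IsCycle.of_sumCongr_inl {a : Perm α} {b : Perm β} (h : (sumCongr a b).IsCycle)
    {x : α} (hx : a x ≠ x) : a.IsCycle ∧ b = 1 := by
  have hx' : sumCongr a b (Sum.inl x) ≠ Sum.inl x := by simpa using hx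
  refine ⟨⟨x, hx, fun y hy => ?_⟩, ?_⟩
  · obtain ⟨n, hn⟩ := h.sameCycle hx' (y := Sum.inl y) (by simpa using hy)
    exact ⟨n, by simpa [sumCongr_zpow] using hn⟩
  · ext y
    by_contra hy
    exact not_sameCycle_sumCongr_inl_inr a b x y (h.sameCycle hx' (by simpa using hy))

theorem IsCycle.of_sumCongr {a : Perm α} {b : Perm β} (h : (sumCongr a b).IsCycle) :
    a.IsCycle ∧ b = 1 ∨ a = 1 ∧ b.IsCycle := by
  have ⟨z, hz, _⟩ := h
  rcases z with x | y
  · exact .inl (h.of_sumCongr_inl (by simpa using hz))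
  · have h' : (sumCongr b a).IsCycle := by
      convert h.permCongr (sumComm α β) using 1
      ext (x | x) <;> simp [permCongr_apply]
    exact .inr (h'.of_sumCongr_inl (by simpa using hz)).symm

theorem IsCycle.viaEmbedding {f : Perm β} (hf : f.IsCycle) (ι : β ↪ α) :
    (f.viaEmbedding ι).IsCycle := by
  classical
  exact hf.extendDomain _

noncomputable def twistedSum (ι : β ↪ α) (σ : Perm α) (τ : Perm β) : Perm (α ⊕ β) :=
  sumCongr (σ * τ.viaEmbedding ι) τ

variable (ι : β ↪ α)

theorem twistedSum_mul_inv (σ₁ σ₂ : Perm α) (τ₁ τ₂ : Perm β) :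
    twistedSum ι σ₁ τ₁ * (twistedSum ι σ₂ τ₂)⁻¹ =
      sumCongr (σ₁ * (τ₁ * τ₂⁻¹).viaEmbedding ι * σ₂⁻¹) (τ₁ * τ₂⁻¹) := by
  simp only [twistedSum, sumCongr_inv, sumCongr_mul, ← viaEmbeddingHom_apply, map_mul, map_inv,
    mul_inv_rev, mul_assoc]

theorem twistedSum_injective : Function.Injective (Function.uncurry (twistedSum ι)) := by
  rintro ⟨σ₁, τ₁⟩ ⟨σ₂, τ₂⟩ h
  have hτ : τ₁ = τ₂ := by
    ext y
    simpa [twistedSum] using congr($h (Sum.inr y))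
  subst hτ
  have hσ : σ₁ * τ₁.viaEmbedding ι = σ₂ * τ₁.viaEmbedding ι := by
    ext x
    simpa [twistedSum] using congr($h (Sum.inl x))
  rw [mul_right_cancel hσ]

theorem not_isCycle_twistedSum_mul_inv {σ₁ σ₂ : Perm α} (h₁₂ : ¬(σ₁ * σ₂⁻¹).IsCycle)
    (h₂₁ : ¬(σ₂ * σ₁⁻¹).IsCycle) (τ₁ τ₂ : Perm β) :
    ¬(twistedSum ι σ₁ τ₁ * (twistedSum ι σ₂ τ₂)⁻¹).IsCycle := by
  rw [twistedSum_mul_inv]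
  intro h
  rcases h.of_sumCongr with ⟨hσ, hτ⟩ | ⟨hσ, hτ⟩
  · rw [hτ, ← viaEmbeddingHom_apply, map_one, mul_one] at hσ
    exact h₁₂ hσ
  · have : σ₂ = σ₁ * (τ₁ * τ₂⁻¹).viaEmbedding ι := (mul_inv_eq_one.1 hσ).symm
    rw [this] at h₂₁
    exact h₂₁ ((hτ.viaEmbedding ι).conj)

end Equiv.Perm

open Perm

theorem IsIndep.exists_card_eq_mul_factorial {m k n : ℕ} (hkm : k ≤ m) (hn : m + k = n)
    {A : Finset (Perm (Fin m))} (hA : IsIndep A) :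
    ∃ B : Finset (Perm (Fin n)), IsIndep B ∧ B.card = A.card * k ! := by
  classical
  let e : Fin m ⊕ Fin k ≃ Fin n := finSumFinEquiv.trans (finCongr hn)
  let F : Perm (Fin m) × Perm (Fin k) → Perm (Fin n) :=
    fun p => e.permCongrHom (twistedSum (Fin.castLEEmb hkm) p.1 p.2)
  have hF : F.Injective := e.permCongrHom.injective.comp (twistedSum_injective _)
  refine ⟨(A ×ˢ univ).image F, ?_, ?_⟩
  · simp only [IsIndep, forall_mem_image, mem_product, mem_univ, and_true, Prod.forall]
    intro σ₁ τ₁ hσ₁ σ₂ τ₂ hσ₂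
    rw [← map_inv, ← map_mul]
    exact (isCycle_permCongr_iff e).not.2 <|
      not_isCycle_twistedSum_mul_inv _ (hA _ hσ₁ _ hσ₂) (hA _ hσ₂ _ hσ₁) τ₁ τ₂
  · rw [card_image_of_injective _ hF, card_product, Finset.card_univ, Fintype.card_perm,
      Fintype.card_fin]

def birkhoffBound (n : ℕ) : ℕ := ∏ i ∈ Icc 1 (Nat.log 2 n), (n / 2 ^ i)!

theorem birkhoffBound_monotone : Monotone birkhoffBound := by
  intro a b hab
  calc birkhoffBound a ≤ ∏ i ∈ Icc 1 (Nat.log 2 a), (b / 2 ^ i)! :=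
        prod_le_prod' fun i _ => factorial_le (Nat.div_le_div_right hab)
    _ ≤ birkhoffBound b :=
        prod_le_prod_of_subset_of_one_le' (Icc_subset_Icc_right (Nat.log_mono_right hab))
          fun i _ _ => factorial_pos _

theorem birkhoffBound_eq (n : ℕ) : birkhoffBound n = (n / 2)! * birkhoffBound (n / 2) := by
  rcases lt_or_ge n 2 with hn | hn
  · simp [birkhoffBound, Nat.log_of_lt hn, Nat.div_eq_of_lt hn]
  rw [birkhoffBound, birkhoffBound, Nat.log_of_one_lt_of_le one_lt_two hn,
    ← mul_prod_Ioc_eq_prod_Icc (by omega), ← Icc_add_one_left_eq_Ioc, ← map_add_right_Icc, prod_map]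
  simp [pow_succ, Nat.div_div_eq_div_mul, mul_comm]

theorem stmt15_general (n : ℕ) :
    ∃ A : Finset (Equiv.Perm (Fin n)), IsIndep A ∧
      ∏ i ∈ Finset.Icc 1 (Nat.log 2 n), (n / 2 ^ i).factorial ≤ A.card := by
  induction n using Nat.strong_induction_on with
  | _ n ih =>
  rcases lt_or_ge n 2 with hn | hn
  · refine ⟨{1}, by simp [IsIndep, not_isCycle_one], ?_⟩
    simp [Nat.log_of_lt hn]
  obtain ⟨A, hA, hbound⟩ := ih ((n + 1) / 2) (by omega)
  obtain ⟨B, hB, hcard⟩ :=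
    hA.exists_card_eq_mul_factorial (k := n / 2) (n := n) (by omega) (by omega)
  refine ⟨B, hB, ?_⟩
  calc birkhoffBound n = (n / 2)! * birkhoffBound (n / 2) := birkhoffBound_eq n
    _ ≤ (n / 2)! * birkhoffBound ((n + 1) / 2) :=
      Nat.mul_le_mul_left _ (birkhoffBound_monotone (by omega))
    _ ≤ B.card := by rw [hcard, mul_comm]; exact Nat.mul_le_mul_right _ hbound

/-- the independence number of the Birkhoff graph `B_n` is at least
`∏_{i=1}^{⌊log₂ n⌋} ⌊n/2^i⌋!`. -/
theorem stmt15 (n : ℕ) (hn : 1 ≤ n) :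
    ∃ A : Finset (Equiv.Perm (Fin n)), IsIndep A ∧
      ∏ i ∈ Finset.Icc 1 (Nat.log 2 n), (n / 2 ^ i).factorial ≤ A.card :=
  stmt15_general n
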